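/- arXiv:2209.13842 — 3 statements merged into one kernel-verified Lean document; each statement's English description precedes it below -/
import Mathlib

section
/- Suppose g : [0, R] → ℝ is C², g(0) = 0, g'(R) = 0, g > 0 on (0, R], g' > 0 on [0, R), and g satisfies g'' + H·g' + (μ + H')·g = 0 on (0, R), where H(r) = (m-1)·cot r − (k-1)·tan r, with R < π/4, m ≥ 2, k ≥ 1, k ≤ m, and μ ≥ 2(m+k). Then g'(r) − 2·cot(2r)·g(r) ≤ 0 for all r ∈ (0, R). -/
/-!
The function `φ r = sin (2r) / 2` solves the same equation as `g` with `μ` replaced by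
`2(m+k)`, and `w = sin^(m-1) · cos^(k-1)` satisfies `w' = H w`. Hence the weighted Wronskian
`w (φ g' - φ' g)` has derivative `(2(m+k) - μ) w φ g ≤ 0`; it vanishes at `0`, so it is
nonpositive, i.e. `φ g' ≤ φ' g`, which is the claim after dividing by `φ`.
-/

open Real Set Topology

theorem hasDerivAt_mul_wronskian {w φ dφ g dg : ℝ → ℝ} {x h q d2φ d2g ν μ : ℝ}
    (hw : HasDerivAt w (h * w x) x) (hφ : HasDerivAt φ (dφ x) x) (hdφ : HasDerivAt dφ d2φ x)
    (hg : HasDerivAt g (dg x) x) (hdg : HasDerivAt dg d2g x)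
    (hφ_ode : d2φ + h * dφ x + (ν + q) * φ x = 0) (hg_ode : d2g + h * dg x + (μ + q) * g x = 0) :
    HasDerivAt (fun t => w t * (φ t * dg t - dφ t * g t)) ((ν - μ) * (w x * φ x * g x)) x :=
  (hw.fun_mul ((hφ.fun_mul hdg).fun_sub (hdφ.fun_mul hg))).congr_deriv <| by
    linear_combination w x * φ x * hg_ode - w x * g x * hφ_ode

theorem HasDerivAt.fun_pow_of_ne_zero {f : ℝ → ℝ} {f' x : ℝ} (hf : HasDerivAt f f' x)
    (hx : f x ≠ 0) (n : ℕ) : HasDerivAt (fun t => f t ^ n) (n * (f' / f x) * f x ^ n) x := by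
  refine (hf.fun_pow n).congr_deriv ?_
  rcases n with _ | n
  · simp
  · rw [pow_succ]
    field_simp
    push_cast
    ring

theorem hasDerivAt_sin_pow_mul_cos_pow (a b : ℕ) {x : ℝ} (hs : sin x ≠ 0) (hc : cos x ≠ 0) :
    HasDerivAt (fun t => sin t ^ a * cos t ^ b)
      ((a * (cos x / sin x) - b * (sin x / cos x)) * (sin x ^ a * cos x ^ b)) x :=
  (((hasDerivAt_sin x).fun_pow_of_ne_zero hs a).fun_mul
    ((hasDerivAt_cos x).fun_pow_of_ne_zero hc b)).congr_deriv (by ring)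

theorem hasDerivAt_cot_sub_tan (a b : ℝ) {x : ℝ} (hs : sin x ≠ 0) (hc : cos x ≠ 0) :
    HasDerivAt (fun t => a * (cos t / sin t) - b * (sin t / cos t))
      (-a / sin x ^ 2 - b / cos x ^ 2) x := by
  refine ((((hasDerivAt_cos x).div (hasDerivAt_sin x) hs).const_mul a).sub
    (((hasDerivAt_sin x).div (hasDerivAt_cos x) hc).const_mul b)).congr_deriv ?_
  field_simp
  linear_combination (-a * cos x ^ 2 - b * sin x ^ 2) * sin_sq_add_cos_sq x

theorem sin_two_mul_div_two_ode (a b : ℝ) {x : ℝ} (hs : sin x ≠ 0) (hc : cos x ≠ 0) :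
    -2 * sin (2 * x) + (a * (cos x / sin x) - b * (sin x / cos x)) * cos (2 * x)
      + (2 * (a + b + 2) + (-a / sin x ^ 2 - b / cos x ^ 2)) * (sin (2 * x) / 2) = 0 := by
  rw [sin_two_mul, cos_two_mul']
  field_simp
  linear_combination (a * cos x ^ 2 + b * sin x ^ 2) * sin_sq_add_cos_sq x

theorem sin_pos_and_cos_pos_of_mem_Ioo {x : ℝ} (hx : x ∈ Ioo 0 (π / 2)) :
    0 < sin x ∧ 0 < cos x :=
  ⟨sin_pos_of_pos_of_lt_pi hx.1 (by linarith [hx.2, pi_pos]),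
    cos_pos_of_mem_Ioo ⟨by linarith [hx.1, pi_pos], hx.2⟩⟩

theorem hasDerivAt_weighted_wronskian_sin_two_mul (a b : ℕ) (μ : ℝ) {g dg : ℝ → ℝ}
    {x d2g : ℝ} (hs : sin x ≠ 0) (hc : cos x ≠ 0)
    (hg : HasDerivAt g (dg x) x) (hdg : HasDerivAt dg d2g x)
    (hode : d2g + (a * (cos x / sin x) - b * (sin x / cos x)) * dg x
      + (μ + (-a / sin x ^ 2 - b / cos x ^ 2)) * g x = 0) :
    HasDerivAt (fun t => sin t ^ a * cos t ^ b * (sin (2 * t) / 2 * dg t - cos (2 * t) * g t))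
      ((2 * (a + b + 2) - μ) * (sin x ^ a * cos x ^ b * (sin (2 * x) / 2) * g x)) x := by
  have hφ : HasDerivAt (fun t => sin (2 * t) / 2) (cos (2 * x)) x := by
    simpa using (((hasDerivAt_id x).const_mul 2).sin).div_const 2
  have hdφ : HasDerivAt (fun t => cos (2 * t)) (-2 * sin (2 * x)) x := by
    simpa [mul_comm] using ((hasDerivAt_id x).const_mul 2).cos
  exact hasDerivAt_mul_wronskian (hasDerivAt_sin_pow_mul_cos_pow a b hs hc) hφ hdφ hg hdg
    (sin_two_mul_div_two_ode a b hs hc) hode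

theorem hasDerivAt_derivWithin_of_contDiffOn {g : ℝ → ℝ} {s : Set ℝ} {x : ℝ}
    (hg : ContDiffOn ℝ 2 g s) (hs : UniqueDiffOn ℝ s) (hx : s ∈ 𝓝 x) :
    HasDerivAt (derivWithin g s) (deriv (deriv g) x) x := by
  have h_eq : deriv g =ᶠ[𝓝 x] derivWithin g s :=
    (eventually_mem_nhds_iff.2 hx).mono fun _ hy => (derivWithin_of_mem_nhds hy).symm
  rw [h_eq.deriv_eq]
  exact (((hg.derivWithin hs le_rfl).differentiableOn one_ne_zero).differentiableAt hx).hasDerivAt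

theorem sin_two_mul_wronskian_nonpos (a b : ℕ) {R μ : ℝ} (hR : 0 < R) (hRπ : R ≤ π / 2)
    (hμ : 2 * (a + b + 2) ≤ μ) {g : ℝ → ℝ} (hg : ContDiffOn ℝ 2 g (Icc 0 R)) (hg0 : g 0 = 0)
    (hg_nonneg : ∀ x ∈ Ioo 0 R, 0 ≤ g x)
    (hode : ∀ x ∈ Ioo 0 R, deriv (deriv g) x
      + (a * (cos x / sin x) - b * (sin x / cos x)) * deriv g x
      + (μ + (-a / sin x ^ 2 - b / cos x ^ 2)) * g x = 0)
    {r : ℝ} (hr : r ∈ Ioo 0 R) :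
    sin (2 * r) / 2 * deriv g r - cos (2 * r) * g r ≤ 0 := by
  have hsc : ∀ x ∈ Ioo 0 R, 0 < sin x ∧ 0 < cos x := fun x hx =>
    sin_pos_and_cos_pos_of_mem_Ioo ⟨hx.1, hx.2.trans_le hRπ⟩
  set dg := derivWithin g (Icc 0 R)
  have hdg_eq : ∀ x ∈ Ioo 0 R, dg x = deriv g x := fun x hx =>
    derivWithin_of_mem_nhds (Icc_mem_nhds hx.1 hx.2)
  set F := fun t => sin t ^ a * cos t ^ b * (sin (2 * t) / 2 * dg t - cos (2 * t) * g t)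
  have hF_cont : ContinuousOn F (Icc 0 R) := by
    have := hg.continuousOn_derivWithin (uniqueDiffOn_Icc hR) one_le_two
    have := hg.continuousOn
    fun_prop
  have hF_deriv : ∀ x ∈ interior (Icc 0 R), HasDerivWithinAt F
      ((2 * (a + b + 2) - μ) * (sin x ^ a * cos x ^ b * (sin (2 * x) / 2) * g x))
      (interior (Icc 0 R)) x := by
    rw [interior_Icc]
    intro x hx
    have hx_nhds := Icc_mem_nhds hx.1 hx.2
    obtain ⟨hs, hc⟩ := hsc x hx
    refine (hasDerivAt_weighted_wronskian_sin_two_mul a b μ (dg := dg) hs.ne' hc.ne' ?_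
      (hasDerivAt_derivWithin_of_contDiffOn hg (uniqueDiffOn_Icc hR) hx_nhds) ?_).hasDerivWithinAt
    · exact hdg_eq x hx ▸ ((hg.differentiableOn two_ne_zero).differentiableAt hx_nhds).hasDerivAt
    · simpa [hdg_eq x hx] using hode x hx
  have hF_anti : AntitoneOn F (Icc 0 R) := by
    refine antitoneOn_of_hasDerivWithinAt_nonpos (convex_Icc 0 R) hF_cont hF_deriv ?_
    rw [interior_Icc]
    intro x hx
    obtain ⟨hs, hc⟩ := hsc x hx
    have := hg_nonneg x hx
    have : 0 < sin (2 * x) := by rw [sin_two_mul]; positivity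
    exact mul_nonpos_of_nonpos_of_nonneg (by linarith) (by positivity)
  have hFr : F r ≤ 0 := by
    simpa [F, hg0] using hF_anti (left_mem_Icc.2 hR.le) (Ioo_subset_Icc_self hr) hr.1.le
  obtain ⟨hs, hc⟩ := hsc r hr
  rw [← hdg_eq r hr]
  exact nonpos_of_mul_nonpos_right hFr (by positivity)

theorem monotonicity_compact_general (m k : ℕ) (hm : 2 ≤ m) (hk : 1 ≤ k)
    (R μ : ℝ) (hR : 0 < R) (hR4 : R < π / 4) (hμ : 2 * ((m : ℝ) + k) ≤ μ)
    (g : ℝ → ℝ) (hg : ContDiffOn ℝ 2 g (Icc 0 R))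
    (hg0 : g 0 = 0)
    (hgpos : ∀ r ∈ Ioc 0 R, 0 < g r)
    (hODE : ∀ r ∈ Ioo 0 R,
      deriv (deriv g) r
        + (((m : ℝ) - 1) * (Real.cos r / Real.sin r)
            - ((k : ℝ) - 1) * (Real.sin r / Real.cos r)) * deriv g r
        + (μ + deriv (fun t : ℝ => ((m : ℝ) - 1) * (Real.cos t / Real.sin t)
            - ((k : ℝ) - 1) * (Real.sin t / Real.cos t)) r) * g r = 0) :
    ∀ r ∈ Ioo 0 R,
      deriv g r - 2 * (Real.cos (2 * r) / Real.sin (2 * r)) * g r ≤ 0 := by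
  obtain ⟨a, rfl⟩ : ∃ a, m = a + 1 := ⟨m - 1, by omega⟩
  obtain ⟨b, rfl⟩ : ∃ b, k = b + 1 := ⟨k - 1, by omega⟩
  simp only [Nat.cast_add, Nat.cast_one, add_sub_cancel_right] at hμ hODE
  have hRπ : R ≤ π / 2 := by linarith [pi_pos]
  have hode : ∀ x ∈ Ioo 0 R, deriv (deriv g) x
      + (a * (cos x / sin x) - b * (sin x / cos x)) * deriv g x
      + (μ + (-a / sin x ^ 2 - b / cos x ^ 2)) * g x = 0 := fun x hx => by
    obtain ⟨hs, hc⟩ := sin_pos_and_cos_pos_of_mem_Ioo ⟨hx.1, hx.2.trans_le hRπ⟩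
    simpa [(hasDerivAt_cot_sub_tan a b hs.ne' hc.ne').deriv] using hODE x hx
  intro r hr
  have hW := sin_two_mul_wronskian_nonpos a b hR hRπ (by linarith) hg hg0
    (fun x hx => (hgpos x (Ioo_subset_Ioc_self hx)).le) hode hr
  have hs2 : 0 < sin (2 * r) :=
    sin_pos_of_pos_of_lt_pi (by linarith [hr.1]) (by linarith [hr.2, pi_pos])
  calc deriv g r - 2 * (cos (2 * r) / sin (2 * r)) * g r
      = 2 / sin (2 * r) * (sin (2 * r) / 2 * deriv g r - cos (2 * r) * g r) := by
        field_simp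
    _ ≤ 0 := mul_nonpos_of_nonneg_of_nonpos (by positivity) hW

/-- Compact monotonicity lemma (Lemma 4.2): with
`H(r) = (m-1)·cot r − (k-1)·tan r`, `R < π/4`, `μ ≥ 2(m+k)`, the radial
eigenfunction `g` satisfies `g'(r) − 2·cot(2r)·g(r) ≤ 0` on `(0, R)`. -/
theorem monotonicity_compact (m k : ℕ) (hm : 2 ≤ m) (hk : 1 ≤ k) (hkm : k ≤ m)
    (R μ : ℝ) (hR : 0 < R) (hR4 : R < π / 4) (hμ : 2 * ((m : ℝ) + k) ≤ μ)
    (g : ℝ → ℝ) (hg : ContDiffOn ℝ 2 g (Icc 0 R))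
    (hg0 : g 0 = 0) (hgR : deriv g R = 0)
    (hgpos : ∀ r ∈ Ioc 0 R, 0 < g r)
    (hg'pos : ∀ r ∈ Ico 0 R, 0 < deriv g r)
    (hODE : ∀ r ∈ Ioo 0 R,
      deriv (deriv g) r
        + (((m : ℝ) - 1) * (Real.cos r / Real.sin r)
            - ((k : ℝ) - 1) * (Real.sin r / Real.cos r)) * deriv g r
        + (μ + deriv (fun t : ℝ => ((m : ℝ) - 1) * (Real.cos t / Real.sin t)
            - ((k : ℝ) - 1) * (Real.sin t / Real.cos t)) r) * g r = 0) :
    ∀ r ∈ Ioo 0 R,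
      deriv g r - 2 * (Real.cos (2 * r) / Real.sin (2 * r)) * g r ≤ 0 :=
  monotonicity_compact_general m k hm hk R μ hR hR4 hμ g hg hg0 hgpos hODE
end

section
/- Suppose g : [0, R] → ℝ is C², g(0) = 0, g'(R) = 0, g > 0 on (0, R], g' > 0 on [0, R), and g satisfies g'' + H·g' + (μ + H')·g = 0 on (0, R), where H(r) = (m-1)·coth r + (k-1)·tanh r, with m ≥ 2, 1 ≤ k ≤ m, and μ > 0. Then g'(r) − coth(r)·g(r) ≤ 0 for all r ∈ (0, R); equivalently, g(r)/sinh r is nonincreasing on (0, R). -/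
/-!
Put `W = sinh · g' - cosh · g`, so that `(g / sinh)' = W / sinh²` and `W' = sinh · (g'' - g)`.
Then `W(0) = -g(0) ≤ 0`, and wherever `W ≥ 0` the equation `g'' = -H g' - (μ + H') g`
together with `sinh · g' ≥ cosh · g` and `H ≥ 0` gives
`W' ≤ -(H cosh + (μ + H' + 1) sinh) · g`.
For `H = (m - 1) coth + (k - 1) tanh` one has
`H cosh + (H' + 1) sinh = (m + k - 1) sinh + (k - 1) sinh / cosh² > 0`, so `W' < 0` there and
`W` can never become positive.
-/

open Real Set

theorem nonpos_of_deriv_neg_of_pos {W : ℝ → ℝ} {a b : ℝ} (hW : ContinuousOn W (Icc a b))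
    (ha : W a ≤ 0) (hW' : ∀ x ∈ Ioo a b, 0 < W x → deriv W x < 0) :
    ∀ x ∈ Icc a b, W x ≤ 0 := by
  intro x hx
  by_contra! hWx
  have hS : IsCompact (Icc a x ∩ W ⁻¹' Iic 0) :=
    isCompact_Icc.of_isClosed_subset
      ((hW.mono (Icc_subset_Icc_right hx.2)).preimage_isClosed_of_isClosed isClosed_Icc
        isClosed_Iic)
      inter_subset_left
  obtain ⟨c, ⟨hc, hWc : W c ≤ 0⟩, hc_max⟩ :=
    hS.exists_isGreatest ⟨a, left_mem_Icc.2 hx.1, ha⟩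
  have hcx : c < x := hc.2.lt_of_ne (by rintro rfl; linarith)
  have hpos : ∀ y ∈ Ioc c x, 0 < W y := fun y hy => by
    by_contra! h
    exact (hc_max ⟨⟨hc.1.trans hy.1.le, hy.2⟩, h⟩).not_gt hy.1
  have hanti : StrictAntiOn W (Icc c x) :=
    strictAntiOn_of_deriv_neg (convex_Icc c x) (hW.mono (Icc_subset_Icc hc.1 hx.2)) fun y hy => by
      rw [interior_Icc] at hy
      exact hW' y ⟨hc.1.trans_lt hy.1, hy.2.trans_le hx.2⟩ (hpos y ⟨hy.1, hy.2.le⟩)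
  linarith [hanti (left_mem_Icc.2 hcx.le) (right_mem_Icc.2 hcx.le) hcx]

theorem hasDerivAt_sinh_mul_sub_cosh_mul {g g' : ℝ → ℝ} {g'' r : ℝ}
    (hg : HasDerivAt g (g' r) r) (hg' : HasDerivAt g' g'' r) :
    HasDerivAt (fun t => sinh t * g' t - cosh t * g t) (sinh r * (g'' - g r)) r :=
  (((hasDerivAt_sinh r).mul hg').sub ((hasDerivAt_cosh r).mul hg)).congr_deriv (by ring)

theorem sinh_mul_sub_neg_of_ode {s c a b g'' h v : ℝ} (ha : 0 < a) (hh : 0 ≤ h)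
    (hpos : 0 < h * c + (v + 1) * s) (hode : g'' + h * b + v * a = 0) (hW : c * a ≤ s * b) :
    s * (g'' - a) < 0 := by
  have hexpand : s * (g'' - a) = -(h * (s * b)) - (v + 1) * s * a := by
    linear_combination s * hode
  nlinarith [mul_le_mul_of_nonneg_left hW hh, mul_pos hpos ha]

theorem sinh_mul_deriv_sub_cosh_mul_nonpos {R : ℝ} {g H V : ℝ → ℝ} (hR : 0 < R)
    (hg : ContDiffOn ℝ 2 g (Icc 0 R)) (hg0 : 0 ≤ g 0) (hgpos : ∀ r ∈ Ioo 0 R, 0 < g r)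
    (hH : ∀ r ∈ Ioo 0 R, 0 ≤ H r)
    (hHV : ∀ r ∈ Ioo 0 R, 0 < H r * cosh r + (V r + 1) * sinh r)
    (hODE : ∀ r ∈ Ioo 0 R, deriv (deriv g) r + H r * deriv g r + V r * g r = 0) :
    ∀ r ∈ Ioo 0 R, sinh r * deriv g r - cosh r * g r ≤ 0 := by
  set W := fun t => sinh t * derivWithin g (Icc 0 R) t - cosh t * g t
  have hW_eq : ∀ r ∈ Ioo 0 R, W =ᶠ[nhds r] fun t => sinh t * deriv g t - cosh t * g t :=
    fun r hr => by
      filter_upwards [Ioo_mem_nhds hr.1 hr.2] with t ht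
      simp only [W, derivWithin_of_mem_nhds (Icc_mem_nhds ht.1 ht.2)]
  have hg1 : ContDiffOn ℝ 1 (deriv g) (Ioo 0 R) :=
    (hg.mono Ioo_subset_Icc_self).deriv_of_isOpen isOpen_Ioo (by norm_num)
  have hW' : ∀ r ∈ Ioo 0 R, deriv W r = sinh r * (deriv (deriv g) r - g r) := fun r hr => by
    have hgr : DifferentiableAt ℝ g r :=
      (hg.differentiableOn (by norm_num)).differentiableAt (Icc_mem_nhds hr.1 hr.2)
    have hg'r : DifferentiableAt ℝ (deriv g) r :=
      (hg1.differentiableOn (by norm_num)).differentiableAt (isOpen_Ioo.mem_nhds hr)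
    rw [(hW_eq r hr).deriv_eq]
    exact (hasDerivAt_sinh_mul_sub_cosh_mul hgr.hasDerivAt hg'r.hasDerivAt).deriv
  have hW_cont : ContinuousOn W (Icc 0 R) :=
    (continuous_sinh.continuousOn.mul
      (hg.continuousOn_derivWithin (uniqueDiffOn_Icc hR) (by norm_num))).sub
      (continuous_cosh.continuousOn.mul hg.continuousOn)
  have hW0 : W 0 ≤ 0 := by simpa [W] using hg0
  have hW_nonpos := nonpos_of_deriv_neg_of_pos hW_cont hW0 fun r hr hWr => by
    rw [hW' r hr]
    refine sinh_mul_sub_neg_of_ode (hgpos r hr) (hH r hr) (hHV r hr) (hODE r hr) ?_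
    linarith [(hW_eq r hr).eq_of_nhds]
  intro r hr
  rw [← (hW_eq r hr).eq_of_nhds]
  exact hW_nonpos r (Ioo_subset_Icc_self hr)

theorem antitoneOn_div_sinh {g : ℝ → ℝ} {a b : ℝ} (ha : 0 ≤ a)
    (hg : DifferentiableOn ℝ g (Ioo a b))
    (hW : ∀ r ∈ Ioo a b, sinh r * deriv g r - cosh r * g r ≤ 0) :
    AntitoneOn (fun r => g r / sinh r) (Ioo a b) := by
  have hd : ∀ r ∈ Ioo a b, HasDerivAt (fun r => g r / sinh r)
      ((deriv g r * sinh r - g r * cosh r) / sinh r ^ 2) r := fun r hr =>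
    (hg.differentiableAt (isOpen_Ioo.mem_nhds hr)).hasDerivAt.div (hasDerivAt_sinh r)
      (sinh_pos_iff.2 (ha.trans_lt hr.1)).ne'
  apply antitoneOn_of_deriv_nonpos (convex_Ioo a b)
  · exact fun r hr => (hd r hr).continuousAt.continuousWithinAt
  · rw [interior_Ioo]
    exact fun r hr => (hd r hr).differentiableAt.differentiableWithinAt
  · rw [interior_Ioo]
    intro r hr
    rw [(hd r hr).deriv]
    exact div_nonpos_of_nonpos_of_nonneg (by linarith [hW r hr]) (sq_nonneg _)

theorem hasDerivAt_cosh_div_sinh {r : ℝ} (hr : r ≠ 0) :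
    HasDerivAt (fun t => cosh t / sinh t) (-1 / sinh r ^ 2) r :=
  ((hasDerivAt_cosh r).div (hasDerivAt_sinh r) (sinh_ne_zero.2 hr)).congr_deriv <| by
    rw [← cosh_sq_sub_sinh_sq r]; ring

theorem hasDerivAt_sinh_div_cosh (r : ℝ) :
    HasDerivAt (fun t => sinh t / cosh t) (1 / cosh r ^ 2) r :=
  ((hasDerivAt_sinh r).div (hasDerivAt_cosh r) (cosh_pos r).ne').congr_deriv <| by
    rw [← cosh_sq_sub_sinh_sq r]; ring

noncomputable def meanCurvature (m k r : ℝ) : ℝ :=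
  (m - 1) * (cosh r / sinh r) + (k - 1) * (sinh r / cosh r)

theorem hasDerivAt_meanCurvature (m k : ℝ) {r : ℝ} (hr : r ≠ 0) :
    HasDerivAt (meanCurvature m k) ((m - 1) * (-1 / sinh r ^ 2) + (k - 1) * (1 / cosh r ^ 2)) r :=
  ((hasDerivAt_cosh_div_sinh hr).const_mul _).add ((hasDerivAt_sinh_div_cosh r).const_mul _)

theorem meanCurvature_nonneg {m k r : ℝ} (hm : 1 ≤ m) (hk : 1 ≤ k) (hr : 0 ≤ r) :
    0 ≤ meanCurvature m k r := by
  have := sinh_nonneg_iff.2 hr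
  have := cosh_pos r
  unfold meanCurvature
  positivity

theorem meanCurvature_mul_cosh_add_deriv_mul_sinh (m k : ℝ) {r : ℝ} (hr : r ≠ 0) :
    meanCurvature m k r * cosh r + deriv (meanCurvature m k) r * sinh r =
      (m + k - 2) * sinh r + (k - 1) * (sinh r / cosh r ^ 2) := by
  have := sinh_ne_zero.2 hr
  have := (cosh_pos r).ne'
  rw [(hasDerivAt_meanCurvature m k hr).deriv, meanCurvature]
  field_simp
  linear_combination (m - 1) * cosh r ^ 2 * cosh_sq_sub_sinh_sq r

theorem meanCurvature_mul_cosh_add_pos {m k μ r : ℝ} (hk : 1 ≤ k) (hmkμ : 1 < m + k + μ)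
    (hr : 0 < r) :
    0 < meanCurvature m k r * cosh r + (μ + deriv (meanCurvature m k) r + 1) * sinh r := by
  have hs := sinh_pos_iff.2 hr
  have := cosh_pos r
  have := meanCurvature_mul_cosh_add_deriv_mul_sinh m k hr.ne'
  have : 0 ≤ (k - 1) * (sinh r / cosh r ^ 2) := by
    have : 0 ≤ k - 1 := by linarith
    positivity
  nlinarith

theorem monotonicity_noncompact_general (m k : ℕ) (hm : 2 ≤ m) (hk : 1 ≤ k)
    (R μ : ℝ) (hR : 0 < R) (hμ : 0 < μ)
    (g : ℝ → ℝ) (hg : ContDiffOn ℝ 2 g (Icc 0 R))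
    (hg0 : g 0 = 0)
    (hgpos : ∀ r ∈ Ioc 0 R, 0 < g r)
    (hODE : ∀ r ∈ Ioo 0 R,
      deriv (deriv g) r
        + (((m : ℝ) - 1) * (Real.cosh r / Real.sinh r)
            + ((k : ℝ) - 1) * (Real.sinh r / Real.cosh r)) * deriv g r
        + (μ + deriv (fun t : ℝ => ((m : ℝ) - 1) * (Real.cosh t / Real.sinh t)
            + ((k : ℝ) - 1) * (Real.sinh t / Real.cosh t)) r) * g r = 0) :
    (∀ r ∈ Ioo 0 R, deriv g r - (Real.cosh r / Real.sinh r) * g r ≤ 0) ∧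
      AntitoneOn (fun r => g r / Real.sinh r) (Ioo 0 R) := by
  have hm1 : (1 : ℝ) ≤ m := by exact_mod_cast (by omega : 1 ≤ m)
  have hk1 : (1 : ℝ) ≤ k := by exact_mod_cast hk
  have hW := sinh_mul_deriv_sub_cosh_mul_nonpos (H := meanCurvature m k)
    (V := fun r => μ + deriv (meanCurvature m k) r) hR hg hg0.ge
    (fun r hr => hgpos r (Ioo_subset_Ioc_self hr))
    (fun r hr => meanCurvature_nonneg hm1 hk1 hr.1.le)
    (fun r hr => meanCurvature_mul_cosh_add_pos hk1 (by linarith) hr.1) hODE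
  refine ⟨fun r hr => ?_,
    antitoneOn_div_sinh le_rfl ((hg.differentiableOn (by norm_num)).mono Ioo_subset_Icc_self) hW⟩
  have hs := sinh_pos_iff.2 hr.1
  have : deriv g r - cosh r / sinh r * g r = (sinh r * deriv g r - cosh r * g r) / sinh r := by
    field_simp
  rw [this]
  exact div_nonpos_of_nonpos_of_nonneg (hW r hr) hs.le

/-- Noncompact monotonicity lemma (Lemma 5.1): with
`H(r) = (m-1)·coth r + (k-1)·tanh r` and `μ > 0`, the radial eigenfunction `g`
satisfies `g'(r) − coth(r)·g(r) ≤ 0` on `(0, R)`, i.e. `g(r)/sinh r` is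
nonincreasing on `(0, R)`. -/
theorem monotonicity_noncompact (m k : ℕ) (hm : 2 ≤ m) (hk : 1 ≤ k) (hkm : k ≤ m)
    (R μ : ℝ) (hR : 0 < R) (hμ : 0 < μ)
    (g : ℝ → ℝ) (hg : ContDiffOn ℝ 2 g (Icc 0 R))
    (hg0 : g 0 = 0) (hgR : deriv g R = 0)
    (hgpos : ∀ r ∈ Ioc 0 R, 0 < g r)
    (hg'pos : ∀ r ∈ Ico 0 R, 0 < deriv g r)
    (hODE : ∀ r ∈ Ioo 0 R,
      deriv (deriv g) r
        + (((m : ℝ) - 1) * (Real.cosh r / Real.sinh r)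
            + ((k : ℝ) - 1) * (Real.sinh r / Real.cosh r)) * deriv g r
        + (μ + deriv (fun t : ℝ => ((m : ℝ) - 1) * (Real.cosh t / Real.sinh t)
            + ((k : ℝ) - 1) * (Real.sinh t / Real.cosh t)) r) * g r = 0) :
    (∀ r ∈ Ioo 0 R, deriv g r - (Real.cosh r / Real.sinh r) * g r ≤ 0) ∧
      AntitoneOn (fun r => g r / Real.sinh r) (Ioo 0 R) :=
  monotonicity_noncompact_general m k hm hk R μ hR hμ g hg hg0 hgpos hODE
end

section
/- Let g : [0, R] → ℝ satisfy the hypotheses of the noncompact monotonicity lemma (g(0)=0, g'(R)=0, g, g' positive in the interior, solving g'' + H g' + (μ + H')g = 0 with H(r) = (m-1)coth r + (k-1)tanh r, μ > 0). Define G(r) = g(r) for r < R and G(r) = g(R) for r ≥ R. Then r ↦ (m−k)·G(r)²/sinh²r + (k−1)·G(r)²/(sinh²r·cosh²r) is nonincreasing on (0, ∞). -/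
/-!
Write `w = g' sinh - g cosh`, so that `g / sinh` is nonincreasing exactly where `w ≤ 0`.
The ODE gives `(ρ w)' = -ρ g sinh (m + k - 1 + μ + (k - 1) / cosh²) ≤ 0` for the integrating
factor `ρ = sinh^(m-1) cosh^(k-1)`, whose logarithmic derivative is `H`; as `ρ w` vanishes at
`0`, `w ≤ 0` on `(0, R)`. Hence `G / sinh` is nonnegative and nonincreasing on `(0, ∞)`
(beyond `R` its numerator is constant), and the weight is
`(G / sinh)² · ((m - k) + (k - 1) / cosh²)`, a product of nonnegative nonincreasing factors.
-/

open Real Set Filter Topology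

noncomputable def cothTanh (a b t : ℝ) : ℝ := a * (cosh t / sinh t) + b * (sinh t / cosh t)

lemma hasDerivAt_cothTanh (a b : ℝ) {x : ℝ} (hx : sinh x ≠ 0) :
    HasDerivAt (cothTanh a b) (-a / sinh x ^ 2 + b / cosh x ^ 2) x := by
  have hc := (cosh_pos x).ne'
  refine ((((hasDerivAt_cosh x).div (hasDerivAt_sinh x) hx).const_mul a).add
    (((hasDerivAt_sinh x).div (hasDerivAt_cosh x) hc).const_mul b)).congr_deriv ?_
  field_simp
  linear_combination (-a * cosh x ^ 2 + b * sinh x ^ 2) * cosh_sq_sub_sinh_sq x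

lemma hasDerivAt_sinh_pow_mul_cosh_pow (p q : ℕ) {x : ℝ} (hx : sinh x ≠ 0) :
    HasDerivAt (fun t => sinh t ^ p * cosh t ^ q) (sinh x ^ p * cosh x ^ q * cothTanh p q x) x := by
  have pow_pred : ∀ (n : ℕ) {y : ℝ}, y ≠ 0 → (n : ℝ) * y ^ (n - 1) = y ^ n * n / y := by
    rintro (_ | n) y hy
    · simp
    · field_simp
      simp [pow_succ]
  refine (((hasDerivAt_sinh x).pow p).mul ((hasDerivAt_cosh x).pow q)).congr_deriv ?_
  rw [pow_pred p hx, pow_pred q (cosh_pos x).ne', cothTanh]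
  simp only [Pi.pow_apply]
  ring

lemma hasDerivAt_deriv_mul_sinh_sub_mul_cosh {g : ℝ → ℝ} {a b μ x : ℝ} (hx : sinh x ≠ 0)
    (hg : HasDerivAt g (deriv g x) x) (hg' : HasDerivAt (deriv g) (deriv (deriv g) x) x)
    (hODE : deriv (deriv g) x + cothTanh a b x * deriv g x
      + (μ + deriv (cothTanh a b) x) * g x = 0) :
    HasDerivAt (fun t => deriv g t * sinh t - g t * cosh t)
      (-cothTanh a b x * (deriv g x * sinh x - g x * cosh x)
        - g x * sinh x * (a + b + μ + 1 + b / cosh x ^ 2)) x := by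
  have hc := (cosh_pos x).ne'
  refine ((hg'.mul (hasDerivAt_sinh x)).sub (hg.mul (hasDerivAt_cosh x))).congr_deriv ?_
  rw [(hasDerivAt_cothTanh a b hx).deriv] at hODE
  unfold cothTanh at hODE ⊢
  field_simp at hODE ⊢
  linear_combination hODE - a * cosh x ^ 2 * g x * cosh_sq_sub_sinh_sq x

lemma ContDiffOn.hasDerivAt_deriv_of_mem_Ioo {g : ℝ → ℝ} {a b x : ℝ}
    (hg : ContDiffOn ℝ 2 g (Icc a b)) (hx : x ∈ Ioo a b) :
    HasDerivAt g (deriv g x) x ∧ HasDerivAt (deriv g) (deriv (deriv g) x) x := by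
  have hgIoo : ContDiffOn ℝ 2 g (Ioo a b) := hg.mono Ioo_subset_Icc_self
  have hnhds : Ioo a b ∈ 𝓝 x := isOpen_Ioo.mem_nhds hx
  exact ⟨((hgIoo.differentiableOn (by norm_num)).differentiableAt hnhds).hasDerivAt,
    (((hgIoo.deriv_of_isOpen isOpen_Ioo (m := 1) (by norm_num)).differentiableOn
      (by norm_num)).differentiableAt hnhds).hasDerivAt⟩

lemma deriv_mul_sinh_sub_mul_cosh_nonpos {p q : ℕ} (hp : p ≠ 0) {R μ : ℝ} (hμ : 0 ≤ μ)
    {g : ℝ → ℝ} (hg : ContDiffOn ℝ 2 g (Icc 0 R)) (hg₀ : ∀ r ∈ Ioo 0 R, 0 ≤ g r)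
    (hODE : ∀ r ∈ Ioo 0 R, deriv (deriv g) r + cothTanh p q r * deriv g r
      + (μ + deriv (cothTanh p q) r) * g r = 0)
    (x : ℝ) (hx : x ∈ Ioo 0 R) :
    deriv g x * sinh x - g x * cosh x ≤ 0 := by
  have hR : 0 < R := hx.1.trans hx.2
  set ρ : ℝ → ℝ := fun t => sinh t ^ p * cosh t ^ q
  -- `derivWithin` keeps `w` continuous up to the endpoint `0`, where `deriv g` may be junk.
  set w : ℝ → ℝ := fun t => derivWithin g (Icc 0 R) t * sinh t - g t * cosh t
  have hw : ∀ y ∈ Ioo 0 R, w y = deriv g y * sinh y - g y * cosh y := fun y hy => by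
    simp only [w, derivWithin_of_mem_nhds (Icc_mem_nhds hy.1 hy.2)]
  have hcont : ContinuousOn (fun t => ρ t * w t) (Icc 0 R) := by
    have := hg.continuousOn_derivWithin (uniqueDiffOn_Icc hR) (by norm_num)
    have := hg.continuousOn
    fun_prop
  have hanti : AntitoneOn (fun t => ρ t * w t) (Icc 0 R) := by
    refine antitoneOn_of_hasDerivWithinAt_nonpos (convex_Icc 0 R) hcont
      (f' := fun y => -(ρ y * g y * sinh y * (p + q + μ + 1 + q / cosh y ^ 2))) ?_ ?_
      <;> intro y hy <;> rw [interior_Icc] at hy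
    · have hs := (sinh_pos_iff.2 hy.1).ne'
      obtain ⟨hg₁, hg₂⟩ := hg.hasDerivAt_deriv_of_mem_Ioo hy
      have hev : (fun t => ρ t * (deriv g t * sinh t - g t * cosh t)) =ᶠ[𝓝 y]
          fun t => ρ t * w t :=
        eventually_of_mem (isOpen_Ioo.mem_nhds hy) fun t ht => by simp only [hw t ht]
      refine (((hasDerivAt_sinh_pow_mul_cosh_pow p q hs).mul
        (hasDerivAt_deriv_mul_sinh_sub_mul_cosh hs hg₁ hg₂ (hODE y hy))).congr_of_eventuallyEq
          hev.symm).hasDerivWithinAt.congr_deriv ?_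
      ring
    · have := hg₀ y hy
      have := sinh_pos_iff.2 hy.1
      have : 0 ≤ (p : ℝ) + q + μ + 1 + q / cosh y ^ 2 := by positivity
      simp only [neg_nonpos, ρ]
      positivity
  have hρw : ρ x * w x ≤ 0 := by
    simpa [ρ, w, hp] using hanti (left_mem_Icc.2 hR.le) (Ioo_subset_Icc_self hx) hx.1.le
  rw [← hw x hx]
  exact nonpos_of_mul_nonpos_right hρw (by positivity [sinh_pos_iff.2 hx.1])

lemma antitoneOn_div_sinh_s9 {f : ℝ → ℝ} {R : ℝ} (hf : ContinuousOn f (Ioc 0 R))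
    (hf' : ∀ x ∈ Ioo 0 R, HasDerivAt f (deriv f x) x)
    (hw : ∀ x ∈ Ioo 0 R, deriv f x * sinh x - f x * cosh x ≤ 0) :
    AntitoneOn (fun r => f r / sinh r) (Ioc 0 R) := by
  refine antitoneOn_of_hasDerivWithinAt_nonpos (convex_Ioc 0 R)
    (f' := fun x => (deriv f x * sinh x - f x * cosh x) / sinh x ^ 2)
    (hf.div continuous_sinh.continuousOn fun y hy => (sinh_pos_iff.2 hy.1).ne') ?_ ?_
    <;> intro x hx <;> rw [interior_Ioc] at hx
  · exact ((hf' x hx).div (hasDerivAt_sinh x) (sinh_pos_iff.2 hx.1).ne').hasDerivWithinAt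
  · exact div_nonpos_of_nonpos_of_nonneg (hw x hx) (sq_nonneg _)

lemma antitoneOn_const_div_sinh {c : ℝ} (hc : 0 ≤ c) :
    AntitoneOn (fun r => c / sinh r) (Ioi 0) := fun _ ha _ _ hab =>
  div_le_div_of_nonneg_left hc (sinh_pos_iff.2 ha) (sinh_le_sinh.2 hab)

lemma antitoneOn_inv_cosh_sq : AntitoneOn (fun r => 1 / cosh r ^ 2) (Ici 0) := by
  intro a ha b hb hab
  have : cosh a ≤ cosh b := cosh_le_cosh.2 (by rwa [abs_of_nonneg ha, abs_of_nonneg hb])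
  exact one_div_le_one_div_of_le (by positivity) (pow_le_pow_left₀ (cosh_pos a).le this 2)

lemma AntitoneOn.div_sinh_extend_const {g G : ℝ → ℝ} {R : ℝ} (hR : 0 < R) (hgR : 0 ≤ g R)
    (hg : AntitoneOn (fun r => g r / sinh r) (Ioc 0 R))
    (hG : ∀ r, G r = if r < R then g r else g R) :
    AntitoneOn (fun r => G r / sinh r) (Ioi 0) := by
  have hle : AntitoneOn (fun r => G r / sinh r) (Ioc 0 R) := hg.congr fun r hr => by
    rcases hr.2.lt_or_eq with h | h <;> simp [hG, h]
  have hge : AntitoneOn (fun r => G r / sinh r) (Ici R) :=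
    ((antitoneOn_const_div_sinh hgR).mono (Ici_subset_Ioi.2 hR)).congr fun r hr => by
      simp [hG, not_lt.2 (mem_Ici.1 hr)]
  simpa [Ioc_union_Ici_eq_Ioi hR] using hle.union_right hge (isGreatest_Ioc hR) isLeast_Ici

lemma antitoneOn_weight {G : ℝ → ℝ} {a b : ℝ} (ha : 0 ≤ a) (hb : 0 ≤ b)
    (hG : AntitoneOn (fun r => G r / sinh r) (Ioi 0)) (hG₀ : ∀ r ∈ Ioi (0 : ℝ), 0 ≤ G r) :
    AntitoneOn (fun r => a * G r ^ 2 / sinh r ^ 2 + b * G r ^ 2 / (sinh r ^ 2 * cosh r ^ 2))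
      (Ioi 0) := by
  have hweight : ∀ r, a * G r ^ 2 / sinh r ^ 2 + b * G r ^ 2 / (sinh r ^ 2 * cosh r ^ 2)
      = (G r / sinh r) ^ 2 * (a + b * (1 / cosh r ^ 2)) := fun r => by ring
  simp only [hweight]
  intro x hx y hy hxy
  have hGy : 0 ≤ G y / sinh y := div_nonneg (hG₀ y hy) (sinh_pos_iff.2 hy).le
  have := antitoneOn_inv_cosh_sq (Ioi_subset_Ici_self hx) (Ioi_subset_Ici_self hy) hxy
  exact mul_le_mul (pow_le_pow_left₀ hGy (hG hx hy hxy) 2) (by gcongr) (by positivity)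
    (by positivity)

theorem weight_antitone_noncompact_general (m k : ℕ) (hm : 2 ≤ m) (hk : 1 ≤ k) (hkm : k ≤ m)
    (R μ : ℝ) (hR : 0 < R) (hμ : 0 < μ)
    (g : ℝ → ℝ) (hg : ContDiffOn ℝ 2 g (Icc 0 R))
    (hgpos : ∀ r ∈ Ioc 0 R, 0 < g r)
    (hODE : ∀ r ∈ Ioo 0 R,
      deriv (deriv g) r
        + (((m : ℝ) - 1) * (Real.cosh r / Real.sinh r)
            + ((k : ℝ) - 1) * (Real.sinh r / Real.cosh r)) * deriv g r
        + (μ + deriv (fun t : ℝ => ((m : ℝ) - 1) * (Real.cosh t / Real.sinh t)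
            + ((k : ℝ) - 1) * (Real.sinh t / Real.cosh t)) r) * g r = 0)
    (G : ℝ → ℝ) (hG : ∀ r : ℝ, G r = if r < R then g r else g R) :
    AntitoneOn (fun r => ((m : ℝ) - k) * G r ^ 2 / Real.sinh r ^ 2
        + ((k : ℝ) - 1) * G r ^ 2 / (Real.sinh r ^ 2 * Real.cosh r ^ 2))
      (Ioi 0) := by
  have hm₁ : ((m - 1 : ℕ) : ℝ) = m - 1 := Nat.cast_pred (by omega)
  have hk₁ : ((k - 1 : ℕ) : ℝ) = k - 1 := Nat.cast_pred hk
  have hw := deriv_mul_sinh_sub_mul_cosh_nonpos (p := m - 1) (q := k - 1) (by omega)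
    hμ.le hg (fun r hr => (hgpos r (Ioo_subset_Ioc_self hr)).le) (by rw [hm₁, hk₁]; exact hODE)
  have hgR₀ : 0 ≤ g R := (hgpos R ⟨hR, le_rfl⟩).le
  have hdiv : AntitoneOn (fun r => g r / sinh r) (Ioc 0 R) :=
    antitoneOn_div_sinh_s9 (hg.continuousOn.mono Ioc_subset_Icc_self)
      (fun x hx => (hg.hasDerivAt_deriv_of_mem_Ioo hx).1) hw
  have hG₀ : ∀ r ∈ Ioi (0 : ℝ), 0 ≤ G r := fun r hr => by
    rw [hG]
    split_ifs with h
    exacts [(hgpos r ⟨hr, h.le⟩).le, hgR₀]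
  exact antitoneOn_weight (sub_nonneg.2 (by exact_mod_cast hkm))
    (sub_nonneg.2 (by exact_mod_cast hk)) (hdiv.div_sinh_extend_const hR hgR₀ hG) hG₀

/-- The weight `G²·(−H')` is nonincreasing on `(0, ∞)` in the noncompact case. -/
theorem weight_antitone_noncompact (m k : ℕ) (hm : 2 ≤ m) (hk : 1 ≤ k) (hkm : k ≤ m)
    (R μ : ℝ) (hR : 0 < R) (hμ : 0 < μ)
    (g : ℝ → ℝ) (hg : ContDiffOn ℝ 2 g (Icc 0 R))
    (hg0 : g 0 = 0) (hgR : deriv g R = 0)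
    (hgpos : ∀ r ∈ Ioc 0 R, 0 < g r)
    (hg'pos : ∀ r ∈ Ico 0 R, 0 < deriv g r)
    (hODE : ∀ r ∈ Ioo 0 R,
      deriv (deriv g) r
        + (((m : ℝ) - 1) * (Real.cosh r / Real.sinh r)
            + ((k : ℝ) - 1) * (Real.sinh r / Real.cosh r)) * deriv g r
        + (μ + deriv (fun t : ℝ => ((m : ℝ) - 1) * (Real.cosh t / Real.sinh t)
            + ((k : ℝ) - 1) * (Real.sinh t / Real.cosh t)) r) * g r = 0)
    (G : ℝ → ℝ) (hG : ∀ r : ℝ, G r = if r < R then g r else g R) :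
    AntitoneOn (fun r => ((m : ℝ) - k) * G r ^ 2 / Real.sinh r ^ 2
        + ((k : ℝ) - 1) * G r ^ 2 / (Real.sinh r ^ 2 * Real.cosh r ^ 2))
      (Ioi 0) :=
  weight_antitone_noncompact_general m k hm hk hkm R μ hR hμ g hg hgpos hODE G hG
end
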